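/- arXiv:hep-th/9611073 — 9 statements merged into one kernel-verified Lean document; each statement's English description precedes it below -/
import Mathlib

section
/- Let X be a Lie algebra over ℝ and R : X → X a linear map. Define the Nijenhuis torsion N_R(x,y) = [Rx, Ry] − R[Rx, y] − R[x, Ry] + R²[x, y]. If N_R = 0 (R is hereditary), then for all x, y ∈ X and all natural numbers m, n: [Rᵐx, Rⁿy] − Rⁿ[Rᵐx, y] = Rᵐ[x, Rⁿy] − R^{m+n}[x, y]. -/
/-!
Write `Dₙ(x, y) = ⁅x, fⁿ y⁆ - fⁿ ⁅x, y⁆`; the identity says `Dₙ(fᵐ x, y) = fᵐ Dₙ(x, y)`.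
Vanishing torsion is exactly `D₁(f x, y) = f D₁(x, y)`, and feeding the torsion identity at
`(x, fⁿ y)` into the case `n` gives the case `n + 1`. Thus `x ↦ Dₙ(x, y)` commutes with `f`,
hence with every `fᵐ`.
-/

section Nijenhuis

variable {K L : Type*} [Semiring K] [LieRing L] [Module K L]

def nijenhuisTorsion (f : Module.End K L) (x y : L) : L :=
  ⁅f x, f y⁆ - f ⁅f x, y⁆ - f ⁅x, f y⁆ + f (f ⁅x, y⁆)

variable {f : Module.End K L}

theorem lie_apply_pow_sub_pow_lie_apply (hf : ∀ x y, nijenhuisTorsion f x y = 0)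
    (n : ℕ) (x y : L) :
    ⁅f x, (f ^ n) y⁆ - (f ^ n) ⁅f x, y⁆ = f (⁅x, (f ^ n) y⁆ - (f ^ n) ⁅x, y⁆) := by
  induction n generalizing y with
  | zero => simp
  | succ n ih =>
    have torsion := hf x ((f ^ n) y)
    have step := congrArg f (ih y)
    simp only [nijenhuisTorsion, map_sub] at torsion step ⊢
    simp only [pow_succ', Module.End.mul_apply]
    linear_combination (norm := module) torsion + step

theorem lie_pow_apply_pow_sub_pow_lie_pow_apply (hf : ∀ x y, nijenhuisTorsion f x y = 0)
    (m n : ℕ) (x y : L) :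
    ⁅(f ^ m) x, (f ^ n) y⁆ - (f ^ n) ⁅(f ^ m) x, y⁆
      = (f ^ m) (⁅x, (f ^ n) y⁆ - (f ^ n) ⁅x, y⁆) := by
  have hcomm : Function.Semiconj (fun x => ⁅x, (f ^ n) y⁆ - (f ^ n) ⁅x, y⁆) f f :=
    fun x => lie_apply_pow_sub_pow_lie_apply hf n x y
  simpa only [Module.End.pow_apply] using (hcomm.iterate_right m) x

end Nijenhuis

/-- If the Nijenhuis torsion of a linear operator `R` on a Lie algebra vanishes
(`R` is hereditary), then
`[Rᵐx, Rⁿy] − Rⁿ[Rᵐx, y] = Rᵐ[x, Rⁿy] − R^{m+n}[x, y]` for all `m n`. -/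
theorem hereditary_power_identity {X : Type*} [LieRing X] [LieAlgebra ℝ X]
    (R : X →ₗ[ℝ] X)
    (hR : ∀ x y : X,
      ⁅R x, R y⁆ - R ⁅R x, y⁆ - R ⁅x, R y⁆ + R (R ⁅x, y⁆) = 0) :
    ∀ (x y : X) (m n : ℕ),
      ⁅(R ^ m) x, (R ^ n) y⁆ - (R ^ n) ⁅(R ^ m) x, y⁆
        = (R ^ m) ⁅x, (R ^ n) y⁆ - (R ^ (m + n)) ⁅x, y⁆ := by
  intro x y m n
  rw [lie_pow_apply_pow_sub_pow_lie_pow_apply hR m n x y, map_sub, pow_add, Module.End.mul_apply]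
end

section
/- Let X be a Lie algebra over ℝ and R : X → X a linear map with vanishing Nijenhuis torsion, and for x ∈ X and n ≥ 0 let (L_x Rⁿ)(y) := [x, Rⁿy] − Rⁿ[x, y]. Then for all x ∈ X and all n ≥ 0 the Lie derivative identity L_{Rx}(Rⁿ) = R ∘ L_x(Rⁿ) holds, i.e. [Rx, Rⁿy] − Rⁿ[Rx, y] = R[x, Rⁿy] − R^{n+1}[x, y] for all y ∈ X. -/
/-- For a linear operator `R` with vanishing Nijenhuis torsion on a Lie algebra,
the Lie derivative identity `L_{Rx}(Rⁿ) = R ∘ L_x(Rⁿ)` holds, i.e.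
`[Rx, Rⁿy] − Rⁿ[Rx, y] = R[x, Rⁿy] − R^{n+1}[x, y]`. -/
theorem hereditary_lieDeriv_power {X : Type*} [LieRing X] [LieAlgebra ℝ X]
    (R : X →ₗ[ℝ] X)
    (hR : ∀ x y : X,
      ⁅R x, R y⁆ - R ⁅R x, y⁆ - R ⁅x, R y⁆ + R (R ⁅x, y⁆) = 0) :
    ∀ (x y : X) (n : ℕ),
      ⁅R x, (R ^ n) y⁆ - (R ^ n) ⁅R x, y⁆
        = R ⁅x, (R ^ n) y⁆ - (R ^ (n + 1)) ⁅x, y⁆ := by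
  intro x y n
  induction n with
  | zero => simp
  | succ n ih =>
    have h1 := hR x ((R ^ n) y)
    have h2 := congrArg R ih
    simp only [map_sub] at h2
    have hp : ∀ m : ℕ, ∀ z : X, (R ^ (m + 1)) z = R ((R ^ m) z) := by
      intro m z
      rw [pow_succ']
      rfl
    rw [hp n ⁅x, y⁆] at h2
    have hnij : ⁅R x, R ((R ^ n) y)⁆
        = R ⁅R x, (R ^ n) y⁆ + R ⁅x, R ((R ^ n) y)⁆ - R (R ⁅x, (R ^ n) y⁆) := by
      rw [← sub_eq_zero, ← h1]; abel
    have h2' := sub_eq_zero.mpr h2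
    rw [hp n y, hp n ⁅R x, y⁆, hp (n+1) ⁅x, y⁆, hp n ⁅x, y⁆, hnij,
      ← sub_eq_zero, ← h2']
    abel
end

section
/- Suppose R : X → X is a linear operator on a Lie algebra X, x₀, y₁ ∈ X satisfy L_{x₀}R = 0, L_{y₁}R = −R², and [x₀, y₁] = 2 R x₀, where (L_x R)(y) = [x, Ry] − R[x, y]. Assume further that R is hereditary (N_R = 0). Define xₙ = Rⁿ x₀ for n ≥ 0 and yₙ = R^{n−1} y₁ for n ≥ 1. Then L_{x₀}(Rⁿ) = 0 and L_{y₁}(Rⁿ) = −n R^{n+1} for all n ≥ 0. -/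
/-!
Writing `L_x T = ⁅ad x, T⁆` for the commutator in `Module.End ℝ X`, `ad x` acts on products of
endomorphisms as a derivation. Hence `L_{x₀}R = 0` says that `ad x₀` commutes with `R`, so with
every `Rⁿ`, while `L_{y₁}R = -R²` gives `L_{y₁}(Rⁿ⁺¹) = L_{y₁}(Rⁿ) R + Rⁿ L_{y₁}R`, and the
formula `L_{y₁}(Rⁿ) = -n Rⁿ⁺¹` follows by induction on `n`.
-/

theorem Ring.lie_mul_right {A : Type*} [Ring A] (a b c : A) :
    ⁅a, b * c⁆ = ⁅a, b⁆ * c + b * ⁅a, c⁆ := by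
  simp only [Ring.lie_def]
  noncomm_ring

theorem Ring.lie_pow_of_lie_eq_neg_sq {A : Type*} [Ring A] {a b : A} (h : ⁅a, b⁆ = -b ^ 2)
    (n : ℕ) : ⁅a, b ^ n⁆ = -(n • b ^ (n + 1)) := by
  induction n with
  | zero => simp [Ring.lie_def]
  | succ n ih =>
    rw [pow_succ, Ring.lie_mul_right, ih, h, succ_nsmul]
    noncomm_ring

theorem LieAlgebra.ad_lie_apply {K L : Type*} [CommRing K] [LieRing L] [LieAlgebra K L]
    (x : L) (T : Module.End K L) (y : L) :
    ⁅LieAlgebra.ad K L x, T⁆ y = ⁅x, T y⁆ - T ⁅x, y⁆ := by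
  simp [Ring.lie_def]

theorem lieDeriv_powers_of_master_symmetry_general {X : Type*} [LieRing X] [LieAlgebra ℝ X]
    (R : X →ₗ[ℝ] X)
    (x₀ y₁ : X)
    (hx₀ : ∀ y : X, ⁅x₀, R y⁆ - R ⁅x₀, y⁆ = 0)
    (hy₁ : ∀ y : X, ⁅y₁, R y⁆ - R ⁅y₁, y⁆ = -(R (R y))) :
    ∀ (n : ℕ) (y : X),
      (⁅x₀, (R ^ n) y⁆ - (R ^ n) ⁅x₀, y⁆ = 0) ∧
      (⁅y₁, (R ^ n) y⁆ - (R ^ n) ⁅y₁, y⁆ = -((n : ℝ) • (R ^ (n + 1)) y)) := by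
  open LieAlgebra in
  have hx : Commute (ad ℝ X x₀) R :=
    commute_iff_lie_eq.mpr <| LinearMap.ext fun y => by rw [ad_lie_apply, hx₀]; rfl
  have hy : ⁅ad ℝ X y₁, R⁆ = -R ^ 2 :=
    LinearMap.ext fun y => by rw [ad_lie_apply, hy₁]; rfl
  intro n y
  refine ⟨?_, ?_⟩
  · rw [← ad_lie_apply, commute_iff_lie_eq.mp (hx.pow_right n)]; rfl
  · rw [← ad_lie_apply, Ring.lie_pow_of_lie_eq_neg_sq hy n, Nat.cast_smul_eq_nsmul]; rfl

/-- If `R` is hereditary, `L_{x₀}R = 0`, `L_{y₁}R = −R²` and `[x₀,y₁] = 2Rx₀`,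
then `L_{x₀}(Rⁿ) = 0` and `L_{y₁}(Rⁿ) = −n R^{n+1}` for all `n ≥ 0`. -/
theorem lieDeriv_powers_of_master_symmetry {X : Type*} [LieRing X] [LieAlgebra ℝ X]
    (R : X →ₗ[ℝ] X)
    (hR : ∀ x y : X,
      ⁅R x, R y⁆ - R ⁅R x, y⁆ - R ⁅x, R y⁆ + R (R ⁅x, y⁆) = 0)
    (x₀ y₁ : X)
    (hx₀ : ∀ y : X, ⁅x₀, R y⁆ - R ⁅x₀, y⁆ = 0)
    (hy₁ : ∀ y : X, ⁅y₁, R y⁆ - R ⁅y₁, y⁆ = -(R (R y)))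
    (hxy : ⁅x₀, y₁⁆ = (2 : ℝ) • R x₀) :
    ∀ (n : ℕ) (y : X),
      (⁅x₀, (R ^ n) y⁆ - (R ^ n) ⁅x₀, y⁆ = 0) ∧
      (⁅y₁, (R ^ n) y⁆ - (R ^ n) ⁅y₁, y⁆ = -((n : ℝ) • (R ^ (n + 1)) y)) :=
  lieDeriv_powers_of_master_symmetry_general R x₀ y₁ hx₀ hy₁
end

section
/- Let X be a Lie algebra over ℝ and R : X → X a hereditary operator (vanishing Nijenhuis torsion). Suppose x₀, y₁ ∈ X satisfy L_{x₀}R = 0, L_{y₁}R = −R², and [x₀, y₁] = 2 R x₀. Define xₙ = Rⁿ x₀ (n ≥ 0) and yₙ = R^{n−1} y₁ (n ≥ 1). Then [xₙ, xₘ] = 0 for all m, n ≥ 0. -/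
/-!
Since `R` commutes with `ad x₀`, so do its powers, hence `[x₀, Rᵐ x₀] = Rᵐ [x₀, x₀] = 0`.
Vanishing torsion expresses `[R a, R b]` through `R [R a, b]`, `R [a, R b]` and `R² [a, b]`,
so a double induction on `n` and `m` propagates the vanishing of the brackets from `x₀` to
all pairs `Rⁿ x₀`, `Rᵐ x₀`.
-/

section

variable {K L : Type*} [CommRing K] [LieRing L] [LieAlgebra K L] (R : L →ₗ[K] L)

theorem lie_pow_apply_of_lie_apply {x : L} (hx : ∀ y, ⁅x, R y⁆ = R ⁅x, y⁆) (n : ℕ) (y : L) :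
    ⁅x, (R ^ n) y⁆ = (R ^ n) ⁅x, y⁆ := by
  induction n with
  | zero => rfl
  | succ n ih => rw [pow_succ', Module.End.mul_apply, Module.End.mul_apply, hx, ih]

variable {R}
variable (hR : ∀ x y : L, ⁅R x, R y⁆ - R ⁅R x, y⁆ - R ⁅x, R y⁆ + R (R ⁅x, y⁆) = 0)
include hR

theorem lie_apply_apply_eq_zero_of_nijenhuis {a b : L} (hab : ⁅a, b⁆ = 0)
    (hRa : ⁅R a, b⁆ = 0) (hRb : ⁅a, R b⁆ = 0) : ⁅R a, R b⁆ = 0 := by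
  simpa [hab, hRa, hRb] using hR a b

theorem lie_pow_apply_pow_apply_eq_zero_of_nijenhuis {x : L} (hx : ∀ m : ℕ, ⁅x, (R ^ m) x⁆ = 0)
    (n m : ℕ) : ⁅(R ^ n) x, (R ^ m) x⁆ = 0 := by
  induction n generalizing m with
  | zero => exact hx m
  | succ n ihn =>
    induction m with
    | zero => rw [← lie_skew, pow_zero, Module.End.one_apply, hx, neg_zero]
    | succ m ihm =>
      rw [pow_succ' R n, pow_succ' R m, Module.End.mul_apply, Module.End.mul_apply]
      refine lie_apply_apply_eq_zero_of_nijenhuis hR (ihn m) ?_ ?_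
      · rwa [pow_succ', Module.End.mul_apply] at ihm
      · simpa only [pow_succ', Module.End.mul_apply] using ihn (m + 1)

end

theorem symmetries_commute_general {X : Type*} [LieRing X] [LieAlgebra ℝ X]
    (R : X →ₗ[ℝ] X)
    (hR : ∀ x y : X,
      ⁅R x, R y⁆ - R ⁅R x, y⁆ - R ⁅x, R y⁆ + R (R ⁅x, y⁆) = 0)
    (x₀ : X)
    (hx₀ : ∀ y : X, ⁅x₀, R y⁆ - R ⁅x₀, y⁆ = 0) :
    ∀ m n : ℕ, ⁅(R ^ n) x₀, (R ^ m) x₀⁆ = 0 := by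
  have hcomm : ∀ y, ⁅x₀, R y⁆ = R ⁅x₀, y⁆ := fun y => sub_eq_zero.mp (hx₀ y)
  have hx₀_pow : ∀ m : ℕ, ⁅x₀, (R ^ m) x₀⁆ = 0 := fun m => by
    rw [lie_pow_apply_of_lie_apply R hcomm, lie_self, map_zero]
  exact fun m n => lie_pow_apply_pow_apply_eq_zero_of_nijenhuis hR hx₀_pow n m

/-- Under the hypotheses `N_R = 0`, `L_{x₀}R = 0`, `L_{y₁}R = −R²`,
`[x₀,y₁] = 2Rx₀`, the symmetries `xₙ = Rⁿx₀` commute: `[xₙ, xₘ] = 0`. -/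
theorem symmetries_commute {X : Type*} [LieRing X] [LieAlgebra ℝ X]
    (R : X →ₗ[ℝ] X)
    (hR : ∀ x y : X,
      ⁅R x, R y⁆ - R ⁅R x, y⁆ - R ⁅x, R y⁆ + R (R ⁅x, y⁆) = 0)
    (x₀ y₁ : X)
    (hx₀ : ∀ y : X, ⁅x₀, R y⁆ - R ⁅x₀, y⁆ = 0)
    (hy₁ : ∀ y : X, ⁅y₁, R y⁆ - R ⁅y₁, y⁆ = -(R (R y)))
    (hxy : ⁅x₀, y₁⁆ = (2 : ℝ) • R x₀) :
    ∀ m n : ℕ, ⁅(R ^ n) x₀, (R ^ m) x₀⁆ = 0 :=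
  symmetries_commute_general R hR x₀ hx₀
end

section
/- Let η be a p-form compatible with an F-linear operator R : X → X. Then for all vector fields x, y: i_y i_x d(η∘R²) − i_{Ry} i_x d(η∘R) − i_y i_{Rx} d(η∘R) + i_{Ry} i_{Rx} dη = −i_{N_R(x,y)} η, where N_R is the Nijenhuis torsion of R. -/
/-!
Expand each of the four differentials into its action terms `ρ (v i) (μ …)` and bracket terms
`μ (⁅v i, v j⁆, …)` and compare the same term across the four. Apart from the bracket of the
first two entries, the term of `d(η ∘ Rᵏ⁺¹)` equals the term of `d(η ∘ Rᵏ)` with `R` applied to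
the entry in slot 0 or in slot 1: for the action terms this is the definition of `η ∘ R`, for the
bracket terms it is compatibility, which moves `R` between the first two slots of `η` and passes
from `η` to `η ∘ R`. So these terms cancel in pairs in the alternating four-term sum, and the
surviving brackets `-η(R²⁅x, y⁆) + η(R⁅x, Ry⁆) + η(R⁅Rx, y⁆) - η(⁅Rx, Ry⁆)` add up, by
additivity of `η` in its first slot, to `-η(N_R(x, y), …)`.
-/

/-- The Chevalley–Eilenberg differential of a `q`-form on a Lie algebra `X`
acting (via `ρ`) on an algebra of functions `F`. -/
def ceDiff {F X : Type*} [CommRing F] [LieRing X]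
    (ρ : X → F → F) (q : ℕ) (μ : (Fin q → X) → F) :
    (Fin (q + 1) → X) → F :=
  fun v =>
    (∑ i : Fin (q + 1), ((-1 : ℤ) ^ (i : ℕ)) • ρ (v i) (μ (v ∘ i.succAbove)))
    + ∑ i : Fin (q + 1), ∑ j : Fin (q + 1),
        if (i : ℕ) < (j : ℕ) then
          ((-1 : ℤ) ^ ((i : ℕ) + (j : ℕ))) • μ (fun k : Fin q =>
            if (k : ℕ) = 0 then ⁅v i, v j⁆
            else v ⟨if (k : ℕ) - 1 < (i : ℕ) then (k : ℕ) - 1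
                    else if (k : ℕ) < (j : ℕ) then (k : ℕ) else (k : ℕ) + 1,
                    by have := k.isLt; split_ifs <;> omega⟩)
        else 0

/-- Interior product of a vector with a `(q+1)`-form. -/
def intProd {F X : Type*} (q : ℕ) (x : X) (μ : (Fin (q + 1) → X) → F) :
    (Fin q → X) → F :=
  fun u => μ (Fin.cons x u)

open Function

section Slots

variable {X M : Type*}

-- The paper's `η ∘ R` is `compAt R 0 η`, and its `η ∘ R²` is `compAt (R ∘ R) 0 η`.
def compAt {n : ℕ} (R : X → X) (t : Fin n) (μ : (Fin n → X) → M) : (Fin n → X) → M :=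
  fun w => μ (update w t (R (w t)))

lemma compAt_comp {n : ℕ} (f g : X → X) (t : Fin n) (μ : (Fin n → X) → M) :
    compAt (f ∘ g) t μ = compAt g t (compAt f t μ) := by
  funext w
  simp [compAt]

lemma compAt_comm {n : ℕ} (f g : X → X) {s t : Fin n} (hst : s ≠ t) (μ : (Fin n → X) → M) :
    compAt f s (compAt g t μ) = compAt g t (compAt f s μ) := by
  funext w
  simp [compAt, update_of_ne hst, update_of_ne hst.symm, update_comm hst]

lemma compAt_zero_cons {n : ℕ} (R : X → X) (μ : (Fin (n + 1) → X) → M) (a : X)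
    (w : Fin n → X) : compAt R 0 μ (Fin.cons a w) = μ (Fin.cons (R a) w) := by
  simp [compAt, Fin.update_cons_zero]

lemma compAt_one_cons_cons {n : ℕ} (R : X → X) (μ : (Fin (n + 2) → X) → M) (a b : X)
    (w : Fin n → X) :
    compAt R 1 μ (Fin.cons a (Fin.cons b w)) = μ (Fin.cons a (Fin.cons (R b) w)) := by
  rw [compAt, ← Fin.succ_zero_eq_one, Fin.cons_succ, Fin.cons_zero, ← Fin.cons_update,
    Fin.update_cons_zero]

-- For `n = 0` the slots `0` and `1` of `Fin 1` coincide, so every 1-form is compatible.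
def IsCompatible {n : ℕ} (R : X → X) (μ : (Fin (n + 1) → X) → M) : Prop :=
  compAt R 0 μ = compAt R 1 μ

lemma IsCompatible.compAt_zero {n : ℕ} {R : X → X} {μ : (Fin (n + 1) → X) → M}
    (h : IsCompatible R μ) : IsCompatible R (compAt R 0 μ) := by
  by_cases h01 : (0 : Fin (n + 1)) = 1
  · rw [IsCompatible, h01]
  · rw [IsCompatible, compAt_comm R R (Ne.symm h01), ← h]

end Slots

section Combo

variable {X W M : Type*} [AddCommGroup M] {n : ℕ}

-- With `T = ceDiff ρ (n + 1)` and `μₖ = η ∘ Rᵏ` this is the left-hand side of the theorem.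
def nijenhuisCombo (R : X → X) (μ₀ μ₁ μ₂ : W) (T : W → (Fin (n + 2) → X) → M) (a b : X)
    (u : Fin n → X) : M :=
  T μ₂ (Fin.cons a (Fin.cons b u)) - T μ₁ (Fin.cons a (Fin.cons (R b) u))
    - T μ₁ (Fin.cons (R a) (Fin.cons b u)) + T μ₀ (Fin.cons (R a) (Fin.cons (R b) u))

variable (R : X → X) (μ₀ μ₁ μ₂ : W) (a b : X) (u : Fin n → X)

lemma nijenhuisCombo_add (T T' : W → (Fin (n + 2) → X) → M) :
    nijenhuisCombo R μ₀ μ₁ μ₂ (fun μ v => T μ v + T' μ v) a b u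
      = nijenhuisCombo R μ₀ μ₁ μ₂ T a b u + nijenhuisCombo R μ₀ μ₁ μ₂ T' a b u := by
  simp only [nijenhuisCombo]
  abel

lemma nijenhuisCombo_sum {ι : Type*} (s : Finset ι) (T : ι → W → (Fin (n + 2) → X) → M) :
    nijenhuisCombo R μ₀ μ₁ μ₂ (fun μ v => ∑ i ∈ s, T i μ v) a b u
      = ∑ i ∈ s, nijenhuisCombo R μ₀ μ₁ μ₂ (T i) a b u := by
  simp only [nijenhuisCombo, Finset.sum_add_distrib, Finset.sum_sub_distrib]

lemma nijenhuisCombo_eq_zero_of_shift {T : W → (Fin (n + 2) → X) → M} {s : Fin (n + 2)}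
    (hs : s = 0 ∨ s = 1) (h₁ : T μ₁ = compAt R s (T μ₀)) (h₂ : T μ₂ = compAt R s (T μ₁)) :
    nijenhuisCombo R μ₀ μ₁ μ₂ T a b u = 0 := by
  rcases hs with rfl | rfl
  · simp only [nijenhuisCombo, h₁, h₂, compAt_zero_cons]
    abel
  · simp only [nijenhuisCombo, h₁, h₂, compAt_one_cons_cons]
    abel

end Combo

section ChevalleyEilenberg

variable {F X : Type*} [CommRing F]

def ceDiffActionTerm (ρ : X → F → F) {q : ℕ} (i : Fin (q + 1)) (μ : (Fin q → X) → F)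
    (v : Fin (q + 1) → X) : F :=
  ((-1 : ℤ) ^ (i : ℕ)) • ρ (v i) (μ (v ∘ i.succAbove))

lemma ceDiffActionTerm_compAt (ρ : X → F → F) (R : X → X) {q : ℕ} (i : Fin (q + 1))
    (t : Fin q) (μ : (Fin q → X) → F) :
    ceDiffActionTerm ρ i (compAt R t μ) = compAt R (i.succAbove t) (ceDiffActionTerm ρ i μ) := by
  funext v
  simp only [ceDiffActionTerm, compAt, update_of_ne (Fin.succAbove_ne i t).symm,
    update_comp_eq_of_injective _ Fin.succAbove_right_injective, comp_apply]

variable [LieRing X]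

-- The argument of `μ` in the bracket terms of `ceDiff`: `⁅v i, v j⁆`, followed by the entries of
-- `v` other than `v i` and `v j`.
def bracketTuple {q : ℕ} (v : Fin (q + 1) → X) (i j : Fin (q + 1)) : Fin q → X :=
  fun k => if (k : ℕ) = 0 then ⁅v i, v j⁆
    else v ⟨if (k : ℕ) - 1 < (i : ℕ) then (k : ℕ) - 1
            else if (k : ℕ) < (j : ℕ) then (k : ℕ) else (k : ℕ) + 1,
            by have := k.isLt; split_ifs <;> omega⟩

def ceDiffBracketTerm {q : ℕ} (i j : Fin (q + 1)) (μ : (Fin q → X) → F)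
    (v : Fin (q + 1) → X) : F :=
  if (i : ℕ) < (j : ℕ) then ((-1 : ℤ) ^ ((i : ℕ) + (j : ℕ))) • μ (bracketTuple v i j) else 0

lemma ceDiff_eq_sum (ρ : X → F → F) (q : ℕ) :
    ceDiff ρ q = fun μ v =>
      (∑ i, ceDiffActionTerm ρ i μ v) + ∑ i, ∑ j, ceDiffBracketTerm i j μ v :=
  rfl

lemma bracketTuple_update_zero {n : ℕ} (v : Fin (n + 2) → X) {i j : Fin (n + 2)} (hi : i ≠ 0)
    (hij : i < j) (g : X → X) :
    bracketTuple (update v 0 (g (v 0))) i j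
      = update (bracketTuple v i j) 1 (g (bracketTuple v i j 1)) := by
  rw [Fin.lt_def] at hij
  rw [Ne, Fin.ext_iff, Fin.val_zero] at hi
  obtain ⟨n, rfl⟩ : ∃ n', n = n' + 1 := ⟨n - 1, by omega⟩
  funext k
  rcases k with ⟨_ | _ | k, hk⟩
  · simp [bracketTuple, Fin.ext_iff, hi, (show (j : ℕ) ≠ 0 by omega)]
  · simp [bracketTuple, update_apply, Nat.pos_of_ne_zero hi]
  · simp [bracketTuple, update_apply, Fin.ext_iff]
    split_ifs <;> simp

lemma bracketTuple_update_one {n : ℕ} (v : Fin (n + 2) → X) {j : Fin (n + 2)} (hj : 1 < j)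
    (g : X → X) :
    bracketTuple (update v 1 (g (v 1))) 0 j
      = update (bracketTuple v 0 j) 1 (g (bracketTuple v 0 j 1)) := by
  rw [Fin.lt_def, Fin.val_one] at hj
  obtain ⟨n, rfl⟩ : ∃ n', n = n' + 1 := ⟨n - 1, by omega⟩
  funext k
  rcases k with ⟨_ | _ | k, hk⟩
  · simp [bracketTuple, Fin.ext_iff, (show (j : ℕ) ≠ 1 by omega)]
  · simp [bracketTuple, update_apply, hj]
  · simp [bracketTuple, update_apply, Fin.ext_iff]
    split_ifs <;> simp

lemma bracketTuple_cons_cons_zero_one {n : ℕ} (a b : X) (u : Fin n → X) :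
    bracketTuple (Fin.cons a (Fin.cons b u) : Fin (n + 2) → X) 0 1 = Fin.cons ⁅a, b⁆ u := by
  funext k
  cases k using Fin.cases with
  | zero => simp [bracketTuple]
  | succ k =>
    simp only [bracketTuple, Fin.val_succ, Fin.val_zero, Fin.val_one, Nat.add_one_ne_zero,
      if_false, Nat.add_sub_cancel, Nat.not_lt_zero]
    rfl

variable (R : X → X)

lemma ceDiffBracketTerm_compAt_one_of_ne_zero {n : ℕ} {i : Fin (n + 2)} (hi : i ≠ 0)
    (j : Fin (n + 2)) (μ : (Fin (n + 1) → X) → F) :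
    ceDiffBracketTerm i j (compAt R 1 μ) = compAt R 0 (ceDiffBracketTerm i j μ) := by
  funext v
  simp only [ceDiffBracketTerm, compAt]
  split_ifs with hij
  · rw [bracketTuple_update_zero v hi hij]
  · rfl

lemma ceDiffBracketTerm_zero_compAt_one {n : ℕ} {j : Fin (n + 2)} (hj : j ≠ 1)
    (μ : (Fin (n + 1) → X) → F) :
    ceDiffBracketTerm 0 j (compAt R 1 μ) = compAt R 1 (ceDiffBracketTerm 0 j μ) := by
  funext v
  simp only [ceDiffBracketTerm, compAt]
  split_ifs with hj0
  · have hj1 : 1 < j := by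
      rw [Ne, Fin.ext_iff, Fin.val_one] at hj
      rw [Fin.lt_def, Fin.val_one]
      omega
    rw [bracketTuple_update_one v hj1]
  · rfl

lemma ceDiffBracketTerm_zero_one {n : ℕ} (μ : (Fin (n + 1) → X) → F) (a b : X) (u : Fin n → X) :
    ceDiffBracketTerm 0 1 μ (Fin.cons a (Fin.cons b u)) = -μ (Fin.cons ⁅a, b⁆ u) := by
  simp [ceDiffBracketTerm, bracketTuple_cons_cons_zero_one]

end ChevalleyEilenberg

section NijenhuisIdentity

variable {F X : Type*} [CommRing F] {n : ℕ} (R : X → X)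
  {μ₀ μ₁ μ₂ : (Fin (n + 1) → X) → F} (a b : X) (u : Fin n → X)

lemma nijenhuisCombo_ceDiffActionTerm (ρ : X → F → F) (h₁ : μ₁ = compAt R 0 μ₀)
    (h₂ : μ₂ = compAt R 0 μ₁) (i : Fin (n + 2)) :
    nijenhuisCombo R μ₀ μ₁ μ₂ (ceDiffActionTerm ρ i) a b u = 0 := by
  refine nijenhuisCombo_eq_zero_of_shift R μ₀ μ₁ μ₂ a b u (s := i.succAbove 0) ?_
    (by rw [h₁, ceDiffActionTerm_compAt]) (by rw [h₂, ceDiffActionTerm_compAt])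
  cases i using Fin.cases with
  | zero => exact Or.inr (by rw [Fin.succAbove_zero, Fin.succ_zero_eq_one])
  | succ i => exact Or.inl (Fin.succ_succAbove_zero i)

variable [LieRing X]

lemma nijenhuisCombo_ceDiffBracketTerm (h₁ : μ₁ = compAt R 1 μ₀) (h₂ : μ₂ = compAt R 1 μ₁)
    {i j : Fin (n + 2)} (hij : i ≠ 0 ∨ j ≠ 1) :
    nijenhuisCombo R μ₀ μ₁ μ₂ (ceDiffBracketTerm i j) a b u = 0 := by
  by_cases hi : i = 0
  · subst hi
    have hj := hij.resolve_left (not_not.2 rfl)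
    exact nijenhuisCombo_eq_zero_of_shift R μ₀ μ₁ μ₂ a b u (Or.inr rfl)
      (by rw [h₁, ceDiffBracketTerm_zero_compAt_one R hj])
      (by rw [h₂, ceDiffBracketTerm_zero_compAt_one R hj])
  · exact nijenhuisCombo_eq_zero_of_shift R μ₀ μ₁ μ₂ a b u (Or.inl rfl)
      (by rw [h₁, ceDiffBracketTerm_compAt_one_of_ne_zero R hi])
      (by rw [h₂, ceDiffBracketTerm_compAt_one_of_ne_zero R hi])

lemma nijenhuisCombo_ceDiff (ρ : X → F → F) (h0₁ : μ₁ = compAt R 0 μ₀)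
    (h0₂ : μ₂ = compAt R 0 μ₁) (h1₁ : μ₁ = compAt R 1 μ₀) (h1₂ : μ₂ = compAt R 1 μ₁) :
    nijenhuisCombo R μ₀ μ₁ μ₂ (ceDiff ρ (n + 1)) a b u
      = -(μ₂ (Fin.cons ⁅a, b⁆ u) - μ₁ (Fin.cons ⁅a, R b⁆ u) - μ₁ (Fin.cons ⁅R a, b⁆ u)
          + μ₀ (Fin.cons ⁅R a, R b⁆ u)) := by
  rw [ceDiff_eq_sum, nijenhuisCombo_add, nijenhuisCombo_sum, nijenhuisCombo_sum]
  simp only [nijenhuisCombo_sum]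
  rw [Finset.sum_eq_zero fun i _ => nijenhuisCombo_ceDiffActionTerm R a b u ρ h0₁ h0₂ i,
    zero_add, Fintype.sum_eq_single 0, Fintype.sum_eq_single 1]
  · simp only [nijenhuisCombo, ceDiffBracketTerm_zero_one]
    abel
  · exact fun j hj => nijenhuisCombo_ceDiffBracketTerm R a b u h1₁ h1₂ (Or.inr hj)
  · exact fun i hi => Finset.sum_eq_zero fun j _ =>
      nijenhuisCombo_ceDiffBracketTerm R a b u h1₁ h1₂ (Or.inl hi)

end NijenhuisIdentity


theorem intProd_ceDiff_nijenhuis_general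
    {F X : Type*} [CommRing F] [LieRing X]
    [Module F X]
    (ρ : X → F → F)
    (R : X →ₗ[F] X)
    (m : ℕ) (η : (Fin (m + 1) → X) → F)
    (hadd : ∀ (v : Fin (m + 1) → X) (i : Fin (m + 1)) (y z : X),
      η (Function.update v i (y + z))
        = η (Function.update v i y) + η (Function.update v i z))
    (hcompat : ∀ (v : Fin (m + 1) → X) (h0 : 0 < m + 1) (h1 : 1 < m + 1),
      η (Function.update v ⟨0, h0⟩ (R (v ⟨0, h0⟩)))
        = η (Function.update v ⟨1, h1⟩ (R (v ⟨1, h1⟩)))) :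
    ∀ (x y : X) (u : Fin m → X),
      intProd m y (intProd (m + 1) x
          (ceDiff ρ (m + 1)
            (fun w => η (Function.update w 0 (R (R (w 0))))))) u
      - intProd m (R y) (intProd (m + 1) x
          (ceDiff ρ (m + 1)
            (fun w => η (Function.update w 0 (R (w 0)))))) u
      - intProd m y (intProd (m + 1) (R x)
          (ceDiff ρ (m + 1)
            (fun w => η (Function.update w 0 (R (w 0)))))) u
      + intProd m (R y) (intProd (m + 1) (R x) (ceDiff ρ (m + 1) η)) u
      = -intProd m
          (⁅R x, R y⁆ - R ⁅R x, y⁆ - R ⁅x, R y⁆ + R (R ⁅x, y⁆)) η u := by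
  intro x y u
  have hη : IsCompatible R η := by
    rcases m with _ | m
    · rfl
    · funext w
      exact hcompat w (by omega) (by omega)
  let ηu : X →+ F := AddMonoidHom.mk' (fun z => η (Fin.cons z u)) fun z z' => by
    simpa only [Fin.update_cons_zero] using hadd (Fin.cons 0 u) 0 z z'
  change nijenhuisCombo R η (compAt R 0 η) (compAt (R ∘ R) 0 η) (ceDiff ρ (m + 1)) x y u
    = -ηu (⁅R x, R y⁆ - R ⁅R x, y⁆ - R ⁅x, R y⁆ + R (R ⁅x, y⁆))
  rw [nijenhuisCombo_ceDiff R x y u ρ rfl (compAt_comp R R 0 η) hη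
    (by rw [compAt_comp]; exact hη.compAt_zero)]
  simp only [compAt_zero_cons, comp_apply]
  change -(ηu _ - ηu _ - ηu _ + ηu _) = _
  simp only [map_add, map_sub]
  abel

/-- For a `p`-form `η` (`p = m+1 ≥ 1`) compatible with an `F`-linear `R`:
`i_y i_x d(η∘R²) − i_{Ry} i_x d(η∘R) − i_y i_{Rx} d(η∘R) + i_{Ry} i_{Rx} dη
 = −i_{N_R(x,y)} η`, where `N_R` is the Nijenhuis torsion of `R`. -/
theorem intProd_ceDiff_nijenhuis
    {F X : Type*} [CommRing F] [Algebra ℝ F] [LieRing X] [LieAlgebra ℝ X]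
    [Module F X]
    (ρ : X → F → F)
    (hρadd : ∀ (x : X) (a b : F), ρ x (a + b) = ρ x a + ρ x b)
    (hρderiv : ∀ (x : X) (a b : F), ρ x (a * b) = ρ x a * b + a * ρ x b)
    (hρlie : ∀ (x y : X) (a : F), ρ ⁅x, y⁆ a = ρ x (ρ y a) - ρ y (ρ x a))
    (hρaddX : ∀ (x y : X) (a : F), ρ (x + y) a = ρ x a + ρ y a)
    (hρsmulX : ∀ (a : F) (x : X) (b : F), ρ (a • x) b = a * ρ x b)
    (hlie_smul : ∀ (x : X) (a : F) (y : X),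
      ⁅x, a • y⁆ = a • ⁅x, y⁆ + ρ x a • y)
    (R : X →ₗ[F] X)
    (m : ℕ) (η : (Fin (m + 1) → X) → F)
    (hadd : ∀ (v : Fin (m + 1) → X) (i : Fin (m + 1)) (y z : X),
      η (Function.update v i (y + z))
        = η (Function.update v i y) + η (Function.update v i z))
    (hsmul : ∀ (v : Fin (m + 1) → X) (i : Fin (m + 1)) (a : F) (y : X),
      η (Function.update v i (a • y)) = a * η (Function.update v i y))
    (halt : ∀ (v : Fin (m + 1) → X) (i j : Fin (m + 1)),
      i ≠ j → v i = v j → η v = 0)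
    (hcompat : ∀ (v : Fin (m + 1) → X) (h0 : 0 < m + 1) (h1 : 1 < m + 1),
      η (Function.update v ⟨0, h0⟩ (R (v ⟨0, h0⟩)))
        = η (Function.update v ⟨1, h1⟩ (R (v ⟨1, h1⟩)))) :
    ∀ (x y : X) (u : Fin m → X),
      intProd m y (intProd (m + 1) x
          (ceDiff ρ (m + 1)
            (fun w => η (Function.update w 0 (R (R (w 0))))))) u
      - intProd m (R y) (intProd (m + 1) x
          (ceDiff ρ (m + 1)
            (fun w => η (Function.update w 0 (R (w 0)))))) u
      - intProd m y (intProd (m + 1) (R x)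
          (ceDiff ρ (m + 1)
            (fun w => η (Function.update w 0 (R (w 0)))))) u
      + intProd m (R y) (intProd (m + 1) (R x) (ceDiff ρ (m + 1) η)) u
      = -intProd m
          (⁅R x, R y⁆ - R ⁅R x, y⁆ - R ⁅x, R y⁆ + R (R ⁅x, y⁆)) η u :=
  intProd_ceDiff_nijenhuis_general ρ R m η hadd hcompat
end

section
/- Corollary (closedness propagates along a hereditary operator): if R is hereditary (N_R = 0) and Ω₀ is a 2-form compatible with R such that dΩ₀ = 0 and d(Ω₀∘R) = 0, then d(Ω₀∘Rⁿ) = 0 for all n ≥ 0. -/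
/-!
Expanding the brackets `⁅R x, R y⁆` by the vanishing of the Nijenhuis torsion, and moving `R`
across a compatible form `η`, expresses `3 d(ηR²)` as a combination of `d(ηR)` and `dη`
evaluated with `R` inserted in some of the slots. For `η = Ω₀∘Rⁿ` this shows that closedness
of `Ω₀∘Rⁿ` and `Ω₀∘Rⁿ⁺¹` implies closedness of `Ω₀∘Rⁿ⁺²`; over an `ℝ`-algebra `3` is invertible.
-/

/-- The Chevalley–Eilenberg differential of a 2-form:
`dΩ(x,y,z) = xΩ(y,z) − yΩ(x,z) + zΩ(x,y) − Ω([x,y],z) + Ω([x,z],y) − Ω([y,z],x)`. -/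
def ceDiff2 {F X : Type*} [Ring F] [LieRing X]
    (ρ : X → F → F) (Ω : X → X → F) : X → X → X → F :=
  fun x y z =>
    ρ x (Ω y z) - ρ y (Ω x z) + ρ z (Ω x y)
    - Ω ⁅x, y⁆ z + Ω ⁅x, z⁆ y - Ω ⁅y, z⁆ x

section Nijenhuis

variable {F X : Type*} [CommRing F] [LieRing X] [Module F X]

lemma lie_apply_apply_of_nijenhuis_eq_zero {R : X →ₗ[F] X}
    (hR : ∀ x y : X, ⁅R x, R y⁆ - R ⁅R x, y⁆ - R ⁅x, R y⁆ + R (R ⁅x, y⁆) = 0) (x y : X) :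
    ⁅R x, R y⁆ = R ⁅R x, y⁆ + R ⁅x, R y⁆ - R (R ⁅x, y⁆) := by
  rw [← sub_eq_zero, ← hR x y]
  abel

lemma three_mul_ceDiff2_comp_sq (ρ : X → F → F) {R : X →ₗ[F] X}
    (hR : ∀ x y : X, ⁅R x, R y⁆ - R ⁅R x, y⁆ - R ⁅x, R y⁆ + R (R ⁅x, y⁆) = 0)
    {η : X →ₗ[F] X →ₗ[F] F} (hη : ∀ u v : X, η (R u) v = η u (R v)) (x y z : X) :
    3 * ceDiff2 ρ (fun a b => η (R (R a)) b) x y z =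
      2 * (ceDiff2 ρ (fun a b => η (R a) b) (R x) y z
          + ceDiff2 ρ (fun a b => η (R a) b) x (R y) z
          + ceDiff2 ρ (fun a b => η (R a) b) x y (R z))
        - (ceDiff2 ρ (fun a b => η a b) (R x) (R y) z
          + ceDiff2 ρ (fun a b => η a b) (R x) y (R z)
          + ceDiff2 ρ (fun a b => η a b) x (R y) (R z)) := by
  simp only [ceDiff2, lie_apply_apply_of_nijenhuis_eq_zero hR, map_add, map_sub,
    LinearMap.add_apply, LinearMap.sub_apply, ← hη]
  ring

lemma ceDiff2_comp_sq_eq_zero (ρ : X → F → F) (h3 : IsUnit (3 : F)) {R : X →ₗ[F] X}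
    (hR : ∀ x y : X, ⁅R x, R y⁆ - R ⁅R x, y⁆ - R ⁅x, R y⁆ + R (R ⁅x, y⁆) = 0)
    {η : X →ₗ[F] X →ₗ[F] F} (hη : ∀ u v : X, η (R u) v = η u (R v))
    (hd0 : ∀ x y z : X, ceDiff2 ρ (fun a b => η a b) x y z = 0)
    (hd1 : ∀ x y z : X, ceDiff2 ρ (fun a b => η (R a) b) x y z = 0) (x y z : X) :
    ceDiff2 ρ (fun a b => η (R (R a)) b) x y z = 0 := by
  have h := three_mul_ceDiff2_comp_sq ρ hR hη x y z
  simp only [hd0, hd1, add_zero, mul_zero, sub_zero] at h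
  exact h3.mul_right_eq_zero.mp h

end Nijenhuis

theorem closedness_propagates_general
    {F X : Type*} [CommRing F] [Algebra ℝ F] [LieRing X]
    [Module F X]
    (ρ : X → F → F)
    (R : X →ₗ[F] X)
    -- R is hereditary
    (hR : ∀ x y : X,
      ⁅R x, R y⁆ - R ⁅R x, y⁆ - R ⁅x, R y⁆ + R (R ⁅x, y⁆) = 0)
    (Ω : X →ₗ[F] X →ₗ[F] F)
    -- Ω is alternating and compatible with R
    (hcompat : ∀ x y : X, Ω (R x) y = Ω x (R y))
    -- dΩ₀ = 0 and d(Ω₀∘R) = 0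
    (hd0 : ∀ x y z : X, ceDiff2 ρ (fun a b => Ω a b) x y z = 0)
    (hd1 : ∀ x y z : X, ceDiff2 ρ (fun a b => Ω (R a) b) x y z = 0) :
    ∀ (n : ℕ) (x y z : X),
      ceDiff2 ρ (fun a b => Ω ((R ^ n) a) b) x y z = 0 := by
  have h3 : IsUnit (3 : F) :=
    map_ofNat (algebraMap ℝ F) 3 ▸ (IsUnit.mk0 (3 : ℝ) three_ne_zero).map (algebraMap ℝ F)
  have pow_succ_apply : ∀ (n : ℕ) (a : X), (R ^ (n + 1)) a = (R ^ n) (R a) := fun n a => by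
    rw [pow_succ, Module.End.mul_apply]
  intro n
  induction n using Nat.twoStepInduction with
  | zero => exact hd0
  | one => simpa using hd1
  | more n hn hn1 =>
    have hη : ∀ u v : X, (Ω ∘ₗ R ^ n) (R u) v = (Ω ∘ₗ R ^ n) u (R v) := fun u v => by
      simp only [LinearMap.comp_apply, ← pow_succ_apply, pow_succ', Module.End.mul_apply,
        hcompat]
    simp only [pow_succ_apply] at hn1 ⊢
    exact ceDiff2_comp_sq_eq_zero ρ h3 hR hη hn hn1

/-- Closedness propagates along a hereditary operator: if `R` is hereditary and
`Ω₀` is a compatible 2-form with `dΩ₀ = 0` and `d(Ω₀∘R) = 0`, then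
`d(Ω₀∘Rⁿ) = 0` for all `n ≥ 0`. -/
theorem closedness_propagates
    {F X : Type*} [CommRing F] [Algebra ℝ F] [LieRing X] [LieAlgebra ℝ X]
    [Module F X]
    (ρ : X → F → F)
    (hρadd : ∀ (x : X) (a b : F), ρ x (a + b) = ρ x a + ρ x b)
    (hρderiv : ∀ (x : X) (a b : F), ρ x (a * b) = ρ x a * b + a * ρ x b)
    (hρlie : ∀ (x y : X) (a : F), ρ ⁅x, y⁆ a = ρ x (ρ y a) - ρ y (ρ x a))
    (hρaddX : ∀ (x y : X) (a : F), ρ (x + y) a = ρ x a + ρ y a)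
    (hρsmulX : ∀ (a : F) (x : X) (b : F), ρ (a • x) b = a * ρ x b)
    (hlie_smul : ∀ (x : X) (a : F) (y : X),
      ⁅x, a • y⁆ = a • ⁅x, y⁆ + ρ x a • y)
    (R : X →ₗ[F] X)
    -- R is hereditary
    (hR : ∀ x y : X,
      ⁅R x, R y⁆ - R ⁅R x, y⁆ - R ⁅x, R y⁆ + R (R ⁅x, y⁆) = 0)
    (Ω : X →ₗ[F] X →ₗ[F] F)
    -- Ω is alternating and compatible with R
    (halt : ∀ x : X, Ω x x = 0)
    (hcompat : ∀ x y : X, Ω (R x) y = Ω x (R y))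
    -- dΩ₀ = 0 and d(Ω₀∘R) = 0
    (hd0 : ∀ x y z : X, ceDiff2 ρ (fun a b => Ω a b) x y z = 0)
    (hd1 : ∀ x y z : X, ceDiff2 ρ (fun a b => Ω (R a) b) x y z = 0) :
    ∀ (n : ℕ) (x y z : X),
      ceDiff2 ρ (fun a b => Ω ((R ^ n) a) b) x y z = 0 :=
  closedness_propagates_general ρ R hR Ω hcompat hd0 hd1
end

section
/- Hereditary operator plus closed compatible 2-forms yield a Hamiltonian pair: let R : X → X be hereditary, Ω₀ a 2-form compatible with R with the map x ↦ i_xΩ₀ invertible, H₀ defined by Ω₀(H₀ξ, y) = ξ(y), Hₙ = RⁿH₀, and Ωₙ = Ω₀∘Rⁿ. If dΩₖ = 0 for all k ≥ 0, then the Schouten bracket [Hₘ, Hₙ](ξ,η,ζ) := ξ(Hₘ L_{Hₙη} ζ) + ξ(Hₙ L_{Hₘη} ζ) + cyclic(ξ,η,ζ) vanishes for all m, n ≥ 0 and all 1-forms ξ, η, ζ. -/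
/-!
Through `Ω₀`, each summand `ξ(Hₘ L_{Hₙη} ζ)` becomes `Ω₀(w, [Rⁿv, Rᵐu]) - (Rⁿv)·Ω₀(w, Rᵐu)`,
where `u, v, w = H₀ξ, H₀η, H₀ζ`. Since `R` is hereditary,
`[Rⁿx, Rᵐy] + [Rᵐx, Rⁿy] = Rᵐ[x, y]_{Rⁿ} + Rⁿ[x, y]_{Rᵐ}` for the deformed bracket
`[x, y]_N = [Nx, y] + [x, Ny] - N[x, y]`, so the Schouten bracket splits into two cyclic sums,
one for the form `ω = Ω₀(·, Rᵐ·)` deformed by `N = Rⁿ` and one with `m, n` exchanged. Each equals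
`(d i_N ω - i_N dω)(u, v, w)`, which vanishes because `ω` and `i_N ω = 2 Ωₘ₊ₙ` are closed.
-/

/-- A 1-form: an `F`-linear map `X → F`. -/
def OneForm {F X : Type*} [CommRing F] [AddCommGroup X] [Module F X]
    (ξ : X → F) : Prop :=
  (∀ y z : X, ξ (y + z) = ξ y + ξ z) ∧ ∀ (a : F) (y : X), ξ (a • y) = a * ξ y

/-- The Lie derivative of a 1-form: `(L_xζ)(y) = x(ζ(y)) − ζ([x,y])`. -/
def lieDeriv1 {F X : Type*} [Ring F] [LieRing X] (ρ : X → F → F)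
    (x : X) (ζ : X → F) : X → F :=
  fun y => ρ x (ζ y) - ζ ⁅x, y⁆

section

variable {F X : Type*} [CommRing F] [LieRing X] [Module F X]

def IsHereditary (R : X →ₗ[F] X) : Prop :=
  ∀ x y : X, ⁅R x, R y⁆ - R ⁅R x, y⁆ - R ⁅x, R y⁆ + R (R ⁅x, y⁆) = 0

def deformedBracket (N : X →ₗ[F] X) (x y : X) : X :=
  ⁅N x, y⁆ + ⁅x, N y⁆ - N ⁅x, y⁆

namespace IsHereditary

variable {R : X →ₗ[F] X}

theorem lie_apply_apply (hR : IsHereditary R) (x y : X) :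
    ⁅R x, R y⁆ = R ⁅R x, y⁆ + R ⁅x, R y⁆ - R (R ⁅x, y⁆) :=
  eq_of_sub_eq_zero (by rw [← hR x y]; abel)

theorem lie_pow_apply_pow_apply (hR : IsHereditary R) (a b : ℕ) (x y : X) :
    ⁅(R ^ a) x, (R ^ b) y⁆ =
      (R ^ b) ⁅(R ^ a) x, y⁆ + (R ^ a) ⁅x, (R ^ b) y⁆ - (R ^ b) ((R ^ a) ⁅x, y⁆) := by
  induction b generalizing a x y with
  | zero => simp
  | succ b ihb =>
    induction a generalizing x y with
    | zero => simp
    | succ a iha =>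
      have hsucc (k : ℕ) (z : X) : (R ^ (k + 1)) z = R ((R ^ k) z) := by
        rw [pow_succ', Module.End.mul_apply]
      have hcomm (k : ℕ) (z : X) : (R ^ k) (R z) = R ((R ^ k) z) := by
        rw [← hsucc, pow_succ, Module.End.mul_apply]
      rw [hsucc a, hsucc b, hR.lie_apply_apply, ← hsucc a, ← hsucc b, ihb (a + 1), iha,
        ihb a]
      simp only [hsucc, map_add, map_sub, hcomm]
      abel

theorem lie_pow_add_lie_pow (hR : IsHereditary R) (m n : ℕ) (x y : X) :
    ⁅(R ^ n) x, (R ^ m) y⁆ + ⁅(R ^ m) x, (R ^ n) y⁆ =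
      (R ^ m) (deformedBracket (R ^ n) x y) + (R ^ n) (deformedBracket (R ^ m) x y) := by
  have hcomm : (R ^ n) ((R ^ m) ⁅x, y⁆) = (R ^ m) ((R ^ n) ⁅x, y⁆) := by
    rw [← Module.End.mul_apply, pow_mul_comm, Module.End.mul_apply]
  rw [hR.lie_pow_apply_pow_apply, hR.lie_pow_apply_pow_apply]
  simp only [deformedBracket, map_add, map_sub, hcomm]
  abel

end IsHereditary

theorem LinearMap.IsAdjointPair.pow {M M₁ : Type*} [AddCommMonoid M] [Module F M]
    [AddCommMonoid M₁] [Module F M₁] {B : M →ₗ[F] M →ₗ[F] M₁} {f g : Module.End F M}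
    (h : IsAdjointPair B B f g) (k : ℕ) : IsAdjointPair B B ⇑(f ^ k) ⇑(g ^ k) := by
  induction k with
  | zero => exact isAdjointPair_one
  | succ k ih => rw [pow_succ f, pow_succ' g]; exact ih.mul h

theorem LinearMap.IsAlt.neg_compl₂_apply {Ω : X →ₗ[F] X →ₗ[F] F} (hΩ : Ω.IsAlt)
    {N : Module.End F X} (hN : IsAdjointPair Ω Ω N N) (x y : X) :
    -Ω.compl₂ N x y = Ω.compl₂ N y x := by
  rw [compl₂_apply, compl₂_apply, hΩ.neg, hN]

theorem LinearMap.IsAdjointPair.compl₂ {Ω : X →ₗ[F] X →ₗ[F] F} {M N : Module.End F X}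
    (hM : IsAdjointPair Ω Ω M M) (hMN : Commute M N) :
    IsAdjointPair (Ω.compl₂ N) (Ω.compl₂ N) M M := by
  intro x y
  rw [compl₂_apply, compl₂_apply, hM, ← Module.End.mul_apply, ← Module.End.mul_apply,
    hMN.eq]

theorem OneForm.lieDeriv1 {ρ : X → F → F}
    (hρadd : ∀ (x : X) (a b : F), ρ x (a + b) = ρ x a + ρ x b)
    (hρderiv : ∀ (x : X) (a b : F), ρ x (a * b) = ρ x a * b + a * ρ x b)
    (hlie_smul : ∀ (x : X) (a : F) (y : X), ⁅x, a • y⁆ = a • ⁅x, y⁆ + ρ x a • y)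
    {θ : X → F} (hθ : OneForm θ) (x : X) : OneForm (lieDeriv1 ρ x θ) := by
  constructor
  · intro y z
    simp only [_root_.lieDeriv1, lie_add, hθ.1, hρadd]
    ring
  · intro a y
    simp only [_root_.lieDeriv1, hlie_smul, hθ.1, hθ.2, hρderiv]
    ring

theorem apply_H_lieDeriv1 {ρ : X → F → F} {Ω : X →ₗ[F] X →ₗ[F] F} (hΩ : Ω.IsAlt)
    {H : (X → F) → X} (hH : ∀ ξ : X → F, OneForm ξ → ∀ y : X, Ω (H ξ) y = ξ y)
    {N : X →ₗ[F] X} (hN : LinearMap.IsAdjointPair Ω Ω N N) {α β : X → F} (hα : OneForm α)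
    (hβ : OneForm β) {x : X} (hL : OneForm (lieDeriv1 ρ x β)) :
    α (N (H (lieDeriv1 ρ x β))) = Ω (H β) ⁅x, N (H α)⁆ - ρ x (Ω (H β) (N (H α))) := by
  calc α (N (H (lieDeriv1 ρ x β)))
      = Ω (N (H α)) (H (lieDeriv1 ρ x β)) := by rw [← hH α hα, hN]
    _ = -lieDeriv1 ρ x β (N (H α)) := by rw [← hΩ.neg, hH _ hL]
    _ = Ω (H β) ⁅x, N (H α)⁆ - ρ x (Ω (H β) (N (H α))) := by
      simp only [lieDeriv1, hH β hβ]; ring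

theorem cyclic_deformedBracket_eq_ceDiff2 {ρ : X → F → F}
    (hρneg : ∀ (x : X) (c : F), ρ x (-c) = -ρ x c)
    {ω : X →ₗ[F] X →ₗ[F] F} (hskew : ∀ x y, -ω x y = ω y x) {N : X →ₗ[F] X}
    (hN : LinearMap.IsAdjointPair ω ω N N) (u v w : X) :
    ω w (deformedBracket N v u) - ρ (N v) (ω w u)
      + (ω u (deformedBracket N w v) - ρ (N w) (ω u v))
      + (ω v (deformedBracket N u w) - ρ (N u) (ω v w))
    = 2 * ceDiff2 ρ (fun a b => ω a (N b)) u v w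
      - (ceDiff2 ρ (fun a b => ω a b) (N u) v w + ceDiff2 ρ (fun a b => ω a b) u (N v) w
        + ceDiff2 ρ (fun a b => ω a b) u v (N w)) := by
  have hbr : ∀ a b c : X, ω ⁅a, b⁆ c = -ω c ⁅a, b⁆ := fun a b c => (hskew _ _).symm
  have hN' : ∀ a b, ω (N a) b = ω a (N b) := hN
  simp only [ceDiff2, deformedBracket, map_add, map_sub, hbr, hN', ← hskew w u, hρneg,
    ← lie_skew (N v) u, ← lie_skew v (N u), ← lie_skew (N w) v, ← lie_skew w (N v),
    ← lie_skew v u, ← lie_skew w v, map_neg]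
  ring

theorem cyclic_deformedBracket_eq_zero {ρ : X → F → F}
    (hρneg : ∀ (x : X) (c : F), ρ x (-c) = -ρ x c)
    {ω : X →ₗ[F] X →ₗ[F] F} (hskew : ∀ x y, -ω x y = ω y x) {N : X →ₗ[F] X}
    (hN : LinearMap.IsAdjointPair ω ω N N)
    (hω : ∀ x y z, ceDiff2 ρ (fun a b => ω a b) x y z = 0)
    (hωN : ∀ x y z, ceDiff2 ρ (fun a b => ω a (N b)) x y z = 0) (u v w : X) :
    ω w (deformedBracket N v u) - ρ (N v) (ω w u)
      + (ω u (deformedBracket N w v) - ρ (N w) (ω u v))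
      + (ω v (deformedBracket N u w) - ρ (N u) (ω v w)) = 0 := by
  rw [cyclic_deformedBracket_eq_ceDiff2 hρneg hskew hN, hω, hω, hω, hωN]
  ring

end

theorem hamiltonian_pair_of_hereditary_general
    {F X : Type*} [CommRing F] [LieRing X]
    [Module F X]
    (ρ : X → F → F)
    (hρadd : ∀ (x : X) (a b : F), ρ x (a + b) = ρ x a + ρ x b)
    (hρderiv : ∀ (x : X) (a b : F), ρ x (a * b) = ρ x a * b + a * ρ x b)
    (hlie_smul : ∀ (x : X) (a : F) (y : X),
      ⁅x, a • y⁆ = a • ⁅x, y⁆ + ρ x a • y)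
    (R : X →ₗ[F] X)
    -- R is hereditary
    (hR : ∀ x y : X,
      ⁅R x, R y⁆ - R ⁅R x, y⁆ - R ⁅x, R y⁆ + R (R ⁅x, y⁆) = 0)
    (Ω : X →ₗ[F] X →ₗ[F] F)
    (halt : ∀ x : X, Ω x x = 0)
    (hcompat : ∀ x y : X, Ω (R x) y = Ω x (R y))
    -- the map x ↦ i_xΩ₀ is invertible onto 1-forms, with inverse H₀
    (H₀ : (X → F) → X)
    (hH : ∀ ξ : X → F, OneForm ξ → ∀ y : X, Ω (H₀ ξ) y = ξ y)
    -- dΩₖ = 0 for all k ≥ 0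
    (hclosed : ∀ (k : ℕ) (x y z : X),
      ceDiff2 ρ (fun a b => Ω ((R ^ k) a) b) x y z = 0) :
    ∀ (m n : ℕ) (ξ η ζ : X → F),
      OneForm ξ → OneForm η → OneForm ζ →
      ξ ((R ^ m) (H₀ (lieDeriv1 ρ ((R ^ n) (H₀ η)) ζ)))
      + ξ ((R ^ n) (H₀ (lieDeriv1 ρ ((R ^ m) (H₀ η)) ζ)))
      + η ((R ^ m) (H₀ (lieDeriv1 ρ ((R ^ n) (H₀ ζ)) ξ)))
      + η ((R ^ n) (H₀ (lieDeriv1 ρ ((R ^ m) (H₀ ζ)) ξ)))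
      + ζ ((R ^ m) (H₀ (lieDeriv1 ρ ((R ^ n) (H₀ ξ)) η)))
      + ζ ((R ^ n) (H₀ (lieDeriv1 ρ ((R ^ m) (H₀ ξ)) η))) = 0 := by
  intro m n ξ η ζ hξ hη hζ
  have hR : IsHereditary R := hR
  have hcompat : LinearMap.IsAdjointPair Ω Ω R R := hcompat
  have hadj (k : ℕ) := hcompat.pow k
  have hL {θ : X → F} (hθ : OneForm θ) (x : X) := hθ.lieDeriv1 hρadd hρderiv hlie_smul x
  simp only [apply_H_lieDeriv1 halt hH (hadj _) hξ hζ (hL hζ _),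
    apply_H_lieDeriv1 halt hH (hadj _) hη hξ (hL hξ _),
    apply_H_lieDeriv1 halt hH (hadj _) hζ hη (hL hη _)]
  have hρneg (x : X) : ∀ c, ρ x (-c) = -ρ x c := (AddMonoidHom.mk' (ρ x) (hρadd x)).map_neg
  have hclosed_right (k : ℕ) (x y z : X) : ceDiff2 ρ (fun a b => Ω a ((R ^ k) b)) x y z = 0 := by
    simpa only [hadj k _ _] using hclosed k x y z
  have hclosed_twisted (j k : ℕ) (x y z : X) :
      ceDiff2 ρ (fun a b => Ω.compl₂ (R ^ k) a ((R ^ j) b)) x y z = 0 := by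
    simpa only [LinearMap.compl₂_apply, ← Module.End.mul_apply, ← pow_add]
      using hclosed_right (k + j) x y z
  have hcyclic (j k : ℕ) :=
    cyclic_deformedBracket_eq_zero hρneg (LinearMap.IsAlt.neg_compl₂_apply halt (hadj k))
      ((hadj j).compl₂ (Commute.pow_pow_self R j k)) (hclosed_right k) (hclosed_twisted j k)
      (H₀ ξ) (H₀ η) (H₀ ζ)
  have hsplit (z x y : X) :
      Ω z ⁅(R ^ n) x, (R ^ m) y⁆ + Ω z ⁅(R ^ m) x, (R ^ n) y⁆ =
        Ω z ((R ^ m) (deformedBracket (R ^ n) x y))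
          + Ω z ((R ^ n) (deformedBracket (R ^ m) x y)) := by
    rw [← map_add, ← map_add, hR.lie_pow_add_lie_pow]
  simp only [LinearMap.compl₂_apply] at hcyclic
  linear_combination hcyclic n m + hcyclic m n + hsplit (H₀ ζ) (H₀ η) (H₀ ξ)
    + hsplit (H₀ ξ) (H₀ ζ) (H₀ η) + hsplit (H₀ η) (H₀ ξ) (H₀ ζ)

/-- A hereditary operator together with closed compatible 2-forms yields a
Hamiltonian pair: with `H₀` the inverse of `x ↦ i_xΩ₀`, `Hₙ = RⁿH₀` and
`Ωₙ = Ω₀∘Rⁿ`, if `dΩₖ = 0` for all `k`, then the Schouten bracket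
`[Hₘ, Hₙ](ξ,η,ζ) = ξ(Hₘ L_{Hₙη}ζ) + ξ(Hₙ L_{Hₘη}ζ) + cyclic(ξ,η,ζ)` vanishes. -/
theorem hamiltonian_pair_of_hereditary
    {F X : Type*} [CommRing F] [Algebra ℝ F] [LieRing X] [LieAlgebra ℝ X]
    [Module F X]
    (ρ : X → F → F)
    (hρadd : ∀ (x : X) (a b : F), ρ x (a + b) = ρ x a + ρ x b)
    (hρderiv : ∀ (x : X) (a b : F), ρ x (a * b) = ρ x a * b + a * ρ x b)
    (hρlie : ∀ (x y : X) (a : F), ρ ⁅x, y⁆ a = ρ x (ρ y a) - ρ y (ρ x a))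
    (hρaddX : ∀ (x y : X) (a : F), ρ (x + y) a = ρ x a + ρ y a)
    (hρsmulX : ∀ (a : F) (x : X) (b : F), ρ (a • x) b = a * ρ x b)
    (hlie_smul : ∀ (x : X) (a : F) (y : X),
      ⁅x, a • y⁆ = a • ⁅x, y⁆ + ρ x a • y)
    (R : X →ₗ[F] X)
    -- R is hereditary
    (hR : ∀ x y : X,
      ⁅R x, R y⁆ - R ⁅R x, y⁆ - R ⁅x, R y⁆ + R (R ⁅x, y⁆) = 0)
    (Ω : X →ₗ[F] X →ₗ[F] F)
    (halt : ∀ x : X, Ω x x = 0)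
    (hcompat : ∀ x y : X, Ω (R x) y = Ω x (R y))
    -- the map x ↦ i_xΩ₀ is invertible onto 1-forms, with inverse H₀
    (H₀ : (X → F) → X)
    (hH : ∀ ξ : X → F, OneForm ξ → ∀ y : X, Ω (H₀ ξ) y = ξ y)
    (hinv : ∀ ξ : X → F, OneForm ξ → ∃! x : X, ∀ y : X, Ω x y = ξ y)
    -- dΩₖ = 0 for all k ≥ 0
    (hclosed : ∀ (k : ℕ) (x y z : X),
      ceDiff2 ρ (fun a b => Ω ((R ^ k) a) b) x y z = 0) :
    ∀ (m n : ℕ) (ξ η ζ : X → F),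
      OneForm ξ → OneForm η → OneForm ζ →
      ξ ((R ^ m) (H₀ (lieDeriv1 ρ ((R ^ n) (H₀ η)) ζ)))
      + ξ ((R ^ n) (H₀ (lieDeriv1 ρ ((R ^ m) (H₀ η)) ζ)))
      + η ((R ^ m) (H₀ (lieDeriv1 ρ ((R ^ n) (H₀ ζ)) ξ)))
      + η ((R ^ n) (H₀ (lieDeriv1 ρ ((R ^ m) (H₀ ζ)) ξ)))
      + ζ ((R ^ m) (H₀ (lieDeriv1 ρ ((R ^ n) (H₀ ξ)) η)))
      + ζ ((R ^ n) (H₀ (lieDeriv1 ρ ((R ^ m) (H₀ ξ)) η))) = 0 :=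
  hamiltonian_pair_of_hereditary_general ρ hρadd hρderiv hlie_smul R hR Ω halt hcompat H₀ hH hclosed
end

section
/- Let x₀, y_m be vector fields and Ωₙ, ζₙ structures satisfying: ζₙ := i_{xₙ}Ω₀ where xₙ = Rⁿx₀, the forms ζₙ are closed (dζₙ = 0), and the Lie derivative relation L_{yₘ}ζₙ = (1 − m − n) ζ_{m+n} holds for m ≥ 1, n ≥ 0. Then for n ≥ 2 the 1-form ζₙ is exact: ζₙ = d Iₙ with Iₙ := (1/(1−n)) ζ_{n−1}(y₁), using Cartan's formula L_{y₁}ζ_{n−1} = d(i_{y₁}ζ_{n−1}) + i_{y₁}dζ_{n−1}. -/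
/-- The differential of a 1-form: `dζ(x,y) = x(ζ(y)) − y(ζ(x)) − ζ([x,y])`. -/
def ceDiff1 {F X : Type*} [Ring F] [LieRing X]
    (ρ : X → F → F) (ζ : X → F) : X → X → F :=
  fun x y => ρ x (ζ y) - ρ y (ζ x) - ζ ⁅x, y⁆

/-- For a closed `ζ`, Cartan's formula reduces `L_v ζ` to `d(ζ v)`. -/
theorem eq_derivation_of_lieDerivative_eq_smul {F X : Type*} [Ring F] [Module ℝ F] [LieRing X]
    (ρ : X → F → F) (hρsmul : ∀ (x : X) (c : ℝ) (a : F), ρ x (c • a) = c • ρ x a)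
    (ζ ζ' : X → F) (v : X) {c : ℝ} (hc : c ≠ 0)
    (hclosed : ∀ x, ceDiff1 ρ ζ v x = 0)
    (hL : ∀ x, ceDiff1 ρ ζ v x + ρ x (ζ v) = c • ζ' x) (x : X) :
    ζ' x = ρ x (c⁻¹ • ζ v) := by
  have hdζv : ρ x (ζ v) = c • ζ' x := by simpa only [hclosed, zero_add] using hL x
  rw [hρsmul, hdζv, smul_smul, inv_mul_cancel₀ hc, one_smul]

theorem exactness_of_zeta_general
    {F X : Type*} [CommRing F] [Algebra ℝ F] [LieRing X]
    (ρ : X → F → F)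
    (hρsmul : ∀ (x : X) (c : ℝ) (a : F), ρ x (c • a) = c • ρ x a)
    (y : ℕ → X) (ζ : ℕ → X → F)
    -- the 1-forms ζₙ are closed
    (hclosed : ∀ (n : ℕ) (a b : X), ceDiff1 ρ (ζ n) a b = 0)
    -- L_{yₘ}ζₙ = (1 − m − n) ζ_{m+n} for m ≥ 1, n ≥ 0 (Cartan's formula)
    (hL : ∀ (m n : ℕ), 1 ≤ m → ∀ x : X,
      ceDiff1 ρ (ζ n) (y m) x + ρ x (ζ n (y m))
        = ((1 : ℝ) - (m : ℝ) - (n : ℝ)) • ζ (m + n) x) :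
    ∀ n : ℕ, 2 ≤ n → ∀ x : X,
      ζ n x = ρ x (((1 : ℝ) / (1 - (n : ℝ))) • ζ (n - 1) (y 1)) := by
  intro n hn
  have hcoef : (1 : ℝ) - ((1 : ℕ) : ℝ) - ((n - 1 : ℕ) : ℝ) = 1 - n := by
    rw [Nat.cast_sub (by omega)]
    ring
  have hne : (1 : ℝ) - n ≠ 0 := by
    have : (2 : ℝ) ≤ n := by exact_mod_cast hn
    linarith
  rw [one_div]
  refine eq_derivation_of_lieDerivative_eq_smul ρ hρsmul (ζ (n - 1)) (ζ n) (y 1) hne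
    (hclosed (n - 1) (y 1)) fun x => ?_
  simpa only [Nat.add_sub_cancel' (by omega : 1 ≤ n), hcoef] using hL 1 (n - 1) le_rfl x

/-- If `ζₙ = i_{Rⁿx₀}Ω₀` are closed 1-forms satisfying
`L_{yₘ}ζₙ = (1−m−n)ζ_{m+n}` for `m ≥ 1`, `n ≥ 0` (with
`L_yζ = i_y dζ + d(i_yζ)`, Cartan's formula), then for `n ≥ 2` the 1-form
`ζₙ` is exact: `ζₙ = dIₙ` with `Iₙ = (1/(1−n)) ζ_{n−1}(y₁)`. -/
theorem exactness_of_zeta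
    {F X : Type*} [CommRing F] [Algebra ℝ F] [LieRing X] [LieAlgebra ℝ X]
    [Module F X]
    (ρ : X → F → F)
    (hρadd : ∀ (x : X) (a b : F), ρ x (a + b) = ρ x a + ρ x b)
    (hρderiv : ∀ (x : X) (a b : F), ρ x (a * b) = ρ x a * b + a * ρ x b)
    (hρlie : ∀ (x y : X) (a : F), ρ ⁅x, y⁆ a = ρ x (ρ y a) - ρ y (ρ x a))
    (hρsmul : ∀ (x : X) (c : ℝ) (a : F), ρ x (c • a) = c • ρ x a)
    (R : X →ₗ[F] X) (Ω : X →ₗ[F] X →ₗ[F] F)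
    (x₀ : X) (y : ℕ → X) (ζ : ℕ → X → F)
    -- ζₙ = i_{xₙ}Ω₀ with xₙ = Rⁿx₀
    (hζ : ∀ (n : ℕ) (v : X), ζ n v = Ω ((R ^ n) x₀) v)
    -- the 1-forms ζₙ are closed
    (hclosed : ∀ (n : ℕ) (a b : X), ceDiff1 ρ (ζ n) a b = 0)
    -- L_{yₘ}ζₙ = (1 − m − n) ζ_{m+n} for m ≥ 1, n ≥ 0 (Cartan's formula)
    (hL : ∀ (m n : ℕ), 1 ≤ m → ∀ x : X,
      ceDiff1 ρ (ζ n) (y m) x + ρ x (ζ n (y m))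
        = ((1 : ℝ) - (m : ℝ) - (n : ℝ)) • ζ (m + n) x) :
    ∀ n : ℕ, 2 ≤ n → ∀ x : X,
      ζ n x = ρ x (((1 : ℝ) / (1 - (n : ℝ))) • ζ (n - 1) (y 1)) :=
  exactness_of_zeta_general ρ hρsmul y ζ hclosed hL
end

section
/- Involution of the conserved functionals: suppose Ω₀(H₀ξ,y) = ξ(y) defines H₀, Hₖ = RᵏH₀, Ωₖ = Ω₀∘Rᵏ with Ω₀ compatible with R and alternating, and suppose ζₙ = i_{Rⁿx₀}Ω₀ = dIₙ for functionals Iₙ. Then for all i, j in the index set and all k ≥ 0, the Poisson bracket {I_i, I_j}_{H_k} := (H_k dI_i)(I_j) vanishes; in particular it reduces to Ω_{i+j+k}(x₀, x₀) = 0 by skewness. -/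
/-! The bracket `{I_i, I_j}_{H_k}` is `Ω(Rʲx₀, RᵏH₀ζᵢ)`. Since `R` is self-adjoint for `Ω`, moving
all powers of `R` to one side and using the defining property of `H₀` turns it into
`-Ω(x₀, R^{i+j+k}x₀)`. For an alternating form and a self-adjoint `T`, `Ω(x, Tx) = Ω(Tx, x)` is
its own negative, hence zero as soon as `2` is invertible, which it is in an `ℝ`-algebra. -/

namespace LinearMap

variable {R M N : Type*} [CommRing R] [AddCommGroup M] [Module R M] [AddCommGroup N] [Module R N]
  {B : M →ₗ[R] M →ₗ[R] N}

theorem IsAdjointPair.pow_s16 {f g : Module.End R M} (h : IsAdjointPair B B f g) (n : ℕ) :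
    IsAdjointPair B B ⇑(f ^ n) ⇑(g ^ n) := by
  induction n with
  | zero => exact isAdjointPair_one
  | succ n ih => rw [pow_succ, pow_succ']; exact ih.mul h

theorem IsAlt.apply_pow_self_eq_zero (hB : B.IsAlt) {f : Module.End R M}
    (hf : IsAdjointPair B B f f) (h2 : IsUnit (2 : R)) (n : ℕ) (x : M) :
    B x ((f ^ n) x) = 0 := by
  have hneg : -B x ((f ^ n) x) = B x ((f ^ n) x) := by rw [hB.neg, hf.pow_s16 n]
  apply h2.smul_eq_zero.mp
  rw [two_smul]
  nth_rw 1 [← hneg]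
  exact neg_add_cancel _

end LinearMap

theorem conserved_functionals_in_involution_general
    {F X : Type*} [CommRing F] [Algebra ℝ F] [LieRing X]
    [Module F X]
    (ρ : X → F → F)
    (R : X →ₗ[F] X)
    (Ω : X →ₗ[F] X →ₗ[F] F)
    (halt : ∀ x : X, Ω x x = 0)
    (hcompat : ∀ x y : X, Ω (R x) y = Ω x (R y))
    (H₀ : (X → F) → X)
    (hH : ∀ ξ : X → F,
      ((∀ y z : X, ξ (y + z) = ξ y + ξ z) ∧
        ∀ (a : F) (y : X), ξ (a • y) = a * ξ y) →
      ∀ y : X, Ω (H₀ ξ) y = ξ y)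
    (x₀ : X) (I : ℕ → F)
    -- dIₙ = ζₙ, i.e. y·Iₙ = Ω₀(Rⁿx₀, y) for all y
    (hdI : ∀ (n : ℕ) (y : X), ρ y (I n) = Ω ((R ^ n) x₀) y) :
    ∀ i j k : ℕ,
      ρ ((R ^ k) (H₀ (fun y => ρ y (I i)))) (I j) = 0 := by
  intro i j k
  have hΩ : Ω.IsAlt := halt
  have hR : Ω.IsAdjointPair Ω R R := hcompat
  have hdIᵢ : (fun y => ρ y (I i)) = Ω ((R ^ i) x₀) := funext (hdI i)
  have hH₀ : ∀ y, Ω (H₀ (Ω ((R ^ i) x₀))) y = Ω ((R ^ i) x₀) y :=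
    hH _ ⟨map_add _, map_smul _⟩
  have h2 : IsUnit (2 : F) := by
    rw [← map_ofNat (algebraMap ℝ F) 2]
    exact (IsUnit.mk0 (2 : ℝ) two_ne_zero).map _
  rw [hdIᵢ]
  calc ρ ((R ^ k) (H₀ (Ω ((R ^ i) x₀)))) (I j)
      = -Ω ((R ^ k) (H₀ (Ω ((R ^ i) x₀)))) ((R ^ j) x₀) := by rw [hdI, hΩ.neg]
    _ = -Ω ((R ^ i) x₀) ((R ^ k) ((R ^ j) x₀)) := by rw [hR.pow_s16 k, hH₀]
    _ = -Ω x₀ ((R ^ (i + k + j)) x₀) := by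
      rw [hR.pow_s16 i, ← Module.End.mul_apply, ← Module.End.mul_apply, ← pow_add, ← pow_add]
    _ = 0 := by rw [hΩ.apply_pow_self_eq_zero hR h2, neg_zero]

/-- Involution of the conserved functionals: with `Ω₀(H₀ξ,y) = ξ(y)` defining
`H₀` (on 1-forms), `Hₖ = RᵏH₀`, `Ω₀` alternating and compatible with `R`, and
functionals `Iₙ` whose differentials are `ζₙ = i_{Rⁿx₀}Ω₀` (i.e.
`y·Iₙ = Ω₀(Rⁿx₀, y)`), the Poisson brackets `{I_i, I_j}_{H_k} = (H_k dI_i)·I_j`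
all vanish. -/
theorem conserved_functionals_in_involution
    {F X : Type*} [CommRing F] [Algebra ℝ F] [LieRing X] [LieAlgebra ℝ X]
    [Module F X]
    (ρ : X → F → F)
    (hρadd : ∀ (x : X) (a b : F), ρ x (a + b) = ρ x a + ρ x b)
    (hρderiv : ∀ (x : X) (a b : F), ρ x (a * b) = ρ x a * b + a * ρ x b)
    (hρaddX : ∀ (x y : X) (a : F), ρ (x + y) a = ρ x a + ρ y a)
    (hρsmulX : ∀ (a : F) (x : X) (b : F), ρ (a • x) b = a * ρ x b)
    (R : X →ₗ[F] X)
    (Ω : X →ₗ[F] X →ₗ[F] F)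
    (halt : ∀ x : X, Ω x x = 0)
    (hcompat : ∀ x y : X, Ω (R x) y = Ω x (R y))
    (H₀ : (X → F) → X)
    (hH : ∀ ξ : X → F,
      ((∀ y z : X, ξ (y + z) = ξ y + ξ z) ∧
        ∀ (a : F) (y : X), ξ (a • y) = a * ξ y) →
      ∀ y : X, Ω (H₀ ξ) y = ξ y)
    (x₀ : X) (I : ℕ → F)
    -- dIₙ = ζₙ, i.e. y·Iₙ = Ω₀(Rⁿx₀, y) for all y
    (hdI : ∀ (n : ℕ) (y : X), ρ y (I n) = Ω ((R ^ n) x₀) y) :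
    ∀ i j k : ℕ,
      ρ ((R ^ k) (H₀ (fun y => ρ y (I i)))) (I j) = 0 :=
  conserved_functionals_in_involution_general ρ R Ω halt hcompat H₀ hH x₀ I hdI
end
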